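/- Let M be a symmetric subset of a normed space X with 0 ∉ M, and let σ : [0,1] → M be a continuous path with σ(1) = −σ(0). Then the set A = σ([0,1]) ∪ (−σ([0,1])) is a compact, symmetric subset of M not containing 0, A is connected, and its Krasnoselskii genus satisfies γ(A) ≥ 2. -/

import Mathlib

/-!
The set `A` is the symmetrization `S ∪ -S` of the compact connected curve `S = σ([0,1])`; the
endpoint condition `σ 1 = -σ 0` makes `S` and `-S` meet, so `A` is connected. A continuous odd
function `g` on a connected symmetric set takes the values `g x` and `-g x`, hence vanishes
somewhere by the intermediate value theorem, so no odd map `A → ℝ \ {0}` exists.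
-/

open Set

section Symmetrization

variable {G : Type*} [InvolutiveNeg G]

theorem neg_mem_union_neg_self {S : Set G} {x : G} (hx : x ∈ S ∪ -S) : -x ∈ S ∪ -S := by
  rcases hx with hx | hx
  · exact Or.inr (by rwa [mem_neg, neg_neg])
  · exact Or.inl hx

theorem union_neg_self_subset {S M : Set G} (hM : ∀ x ∈ M, -x ∈ M) (hS : S ⊆ M) :
    S ∪ -S ⊆ M :=
  union_subset hS (neg_subset.2 fun x hx => by simpa using hM x (hS hx))

variable [TopologicalSpace G] [ContinuousNeg G]

theorem IsConnected.union_neg_self {S : Set G} (hS : IsConnected S) {x : G} (hx : x ∈ S)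
    (hnx : -x ∈ S) : IsConnected (S ∪ -S) :=
  IsConnected.union ⟨x, hx, hnx⟩ hS ((Homeomorph.neg G).isConnected_preimage.2 hS)

end Symmetrization

theorem IsPreconnected.exists_eq_zero_of_odd {G : Type*} [TopologicalSpace G] [Neg G]
    {A : Set G} (hA : IsPreconnected A) (hsymm : ∀ x ∈ A, -x ∈ A) {x : G} (hx : x ∈ A)
    {g : G → ℝ} (hg : ContinuousOn g A) (hodd : ∀ x ∈ A, g (-x) = -g x) :
    ∃ y ∈ A, g y = 0 := by
  have hval : ∀ {a b : G}, a ∈ A → b ∈ A → g a ≤ 0 → 0 ≤ g b → ∃ y ∈ A, g y = 0 :=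
    fun ha hb h₁ h₂ => hA.intermediate_value ha hb hg ⟨h₁, h₂⟩
  have hnx : g (-x) = -g x := hodd x hx
  rcases le_total (g x) 0 with h | h
  · exact hval hx (hsymm x hx) h (by linarith)
  · exact hval (hsymm x hx) hx (by linarith) h

theorem stmt16_general (X : Type*) [NormedAddCommGroup X]
    (M : Set X) (hsym : ∀ x ∈ M, -x ∈ M) (h0 : (0:X) ∉ M)
    (σ : ℝ → X) (hσ : ContinuousOn σ (Set.Icc 0 1))
    (hmem : Set.MapsTo σ (Set.Icc 0 1) M) (hend : σ 1 = -σ 0) :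
    ∀ A : Set X, A = σ '' Set.Icc 0 1 ∪ -(σ '' Set.Icc 0 1) →
      IsCompact A ∧ A ⊆ M ∧ (∀ x ∈ A, -x ∈ A) ∧ (0:X) ∉ A ∧ IsConnected A ∧
      ¬ ∃ g : X → ℝ, ContinuousOn g A ∧ (∀ x ∈ A, g (-x) = -g x) ∧
        (∀ x ∈ A, g x ≠ 0) := by
  rintro A rfl
  set S := σ '' Icc 0 1
  have hσ0 : σ 0 ∈ S := mem_image_of_mem σ (left_mem_Icc.2 zero_le_one)
  have hnegσ0 : -σ 0 ∈ S := hend ▸ mem_image_of_mem σ (right_mem_Icc.2 zero_le_one)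
  have hAM : S ∪ -S ⊆ M := union_neg_self_subset hsym (image_subset_iff.2 hmem)
  have hsymm : ∀ x ∈ S ∪ -S, -x ∈ S ∪ -S := fun _ => neg_mem_union_neg_self
  have hconn : IsConnected (S ∪ -S) :=
    ((isConnected_Icc zero_le_one).image σ hσ).union_neg_self hσ0 hnegσ0
  have hcomp : IsCompact S := isCompact_Icc.image_of_continuousOn hσ
  refine ⟨hcomp.union hcomp.neg, hAM, hsymm, fun h => h0 (hAM h), hconn, ?_⟩
  rintro ⟨g, hg, hodd, hne⟩
  obtain ⟨y, hy, hgy⟩ := hconn.isPreconnected.exists_eq_zero_of_odd hsymm (Or.inl hσ0) hg hodd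
  exact hne y hy hgy

/-- If `M` is symmetric with `0 ∉ M` and `σ : [0,1] → M` is a continuous path
with `σ(1) = -σ(0)`, then `A = σ([0,1]) ∪ (-σ([0,1]))` is compact, symmetric,
contained in `M`, does not contain `0`, is connected, and has Krasnoselskii
genus `≥ 2` (i.e. there is no continuous odd map `A → ℝ \ {0}`). -/
theorem stmt16 (X : Type*) [NormedAddCommGroup X] [NormedSpace ℝ X]
    (M : Set X) (hsym : ∀ x ∈ M, -x ∈ M) (h0 : (0:X) ∉ M)
    (σ : ℝ → X) (hσ : ContinuousOn σ (Set.Icc 0 1))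
    (hmem : Set.MapsTo σ (Set.Icc 0 1) M) (hend : σ 1 = -σ 0) :
    ∀ A : Set X, A = σ '' Set.Icc 0 1 ∪ -(σ '' Set.Icc 0 1) →
      IsCompact A ∧ A ⊆ M ∧ (∀ x ∈ A, -x ∈ A) ∧ (0:X) ∉ A ∧ IsConnected A ∧
      ¬ ∃ g : X → ℝ, ContinuousOn g A ∧ (∀ x ∈ A, g (-x) = -g x) ∧
        (∀ x ∈ A, g x ≠ 0) :=
  stmt16_general X M hsym h0 σ hσ hmem hend
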